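/- arXiv:2103.08309 — 2 statements merged into one kernel-verified Lean document; each statement's English description precedes it below -/
import Mathlib

section
/- Let (M,g) be a connected Riemannian manifold and F : ℝ → ℝ a smooth function. If the generalized Einstein tensor satisfies E_F(g) = f·g for some smooth function f on M, then f is constant. -/
/-!
Every generalized Einstein tensor is divergence-free: in `δ(E_F(g))` the terms `ctr Ric (grad u)`
coming from `δ(u • Ric)` and `δ(Hess u)` cancel, the Laplacian terms cancel, and the contracted
Bianchi identity `δ Ric = -½ dS` balances `d(½ F(S)) = ½ F'(S) dS`. Taking the divergence of
`E_F(g) = f • g` therefore gives `0 = δ(f • g) = -df`, so `f` is constant.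
-/

noncomputable def fEinsteinTensor {M Sym2T : Type*} [AddCommGroup Sym2T] [Module (M → ℝ) Sym2T]
    (gmet Ric : Sym2T) (S : M → ℝ) (Hess : (M → ℝ) → Sym2T) (lap : (M → ℝ) → M → ℝ)
    (F : ℝ → ℝ) : Sym2T :=
  (deriv F ∘ S) • Ric - Hess (deriv F ∘ S) - (lap (deriv F ∘ S) + (1 / 2 : ℝ) • (F ∘ S)) • gmet

theorem eq_zero_of_add_self_eq_zero {V : Type*} [AddCommGroup V] [Module ℝ V] {x : V}
    (h : x + x = 0) : x = 0 := by
  rw [← two_smul ℝ, smul_eq_zero] at h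
  exact h.resolve_left two_ne_zero

theorem half_smul_add_half_smul {V : Type*} [AddCommGroup V] [Module ℝ V] (x : V) :
    (1 / 2 : ℝ) • x + (1 / 2 : ℝ) • x = x := by
  rw [← add_smul, add_halves, one_smul]

section Divergence

variable {M VF Sym2T OneF : Type*}
  [AddCommGroup Sym2T] [Module (M → ℝ) Sym2T] [AddCommGroup OneF] [Module (M → ℝ) OneF]
  {gmet Ric : Sym2T} {S : M → ℝ} {Hess : (M → ℝ) → Sym2T} {lap : (M → ℝ) → M → ℝ}
  {grad : (M → ℝ) → VF} {d : (M → ℝ) → OneF} {δ2 : Sym2T →+ OneF} {ctr : Sym2T → VF → OneF}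

theorem divergence_smul_metric
    (hδsmul : ∀ (u : M → ℝ) (T : Sym2T), δ2 (u • T) = u • δ2 T - ctr T (grad u))
    (hδg : δ2 gmet = 0) (hctrg : ∀ u : M → ℝ, ctr gmet (grad u) = d u) (v : M → ℝ) :
    δ2 (v • gmet) = -d v := by
  rw [hδsmul, hδg, hctrg, smul_zero, zero_sub]

theorem divergence_fEinsteinTensor_eq [Module ℝ OneF]
    (hδsmul : ∀ (u : M → ℝ) (T : Sym2T), δ2 (u • T) = u • δ2 T - ctr T (grad u))
    (hδHess : ∀ u : M → ℝ, δ2 (Hess u) = d (lap u) - ctr Ric (grad u))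
    (hδg : δ2 gmet = 0) (hctrg : ∀ u : M → ℝ, ctr gmet (grad u) = d u)
    (hdadd : ∀ u w : M → ℝ, d (u + w) = d u + d w)
    (hBianchi : δ2 Ric = -((1 / 2 : ℝ) • d S)) (F : ℝ → ℝ) :
    δ2 (fEinsteinTensor gmet Ric S Hess lap F) =
      d ((1 / 2 : ℝ) • (F ∘ S)) - (deriv F ∘ S) • ((1 / 2 : ℝ) • d S) := by
  rw [fEinsteinTensor, map_sub, map_sub, hδsmul, hδHess,
    divergence_smul_metric hδsmul hδg hctrg, hdadd, hBianchi, smul_neg]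
  abel

theorem divergence_fEinsteinTensor [Module ℝ OneF]
    (hδsmul : ∀ (u : M → ℝ) (T : Sym2T), δ2 (u • T) = u • δ2 T - ctr T (grad u))
    (hδHess : ∀ u : M → ℝ, δ2 (Hess u) = d (lap u) - ctr Ric (grad u))
    (hδg : δ2 gmet = 0) (hctrg : ∀ u : M → ℝ, ctr gmet (grad u) = d u)
    (hdadd : ∀ u w : M → ℝ, d (u + w) = d u + d w)
    (hdchain : ∀ (φ : ℝ → ℝ) (u : M → ℝ), ContDiff ℝ (⊤ : ℕ∞) φ →
      d (φ ∘ u) = (deriv φ ∘ u) • d u)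
    (hBianchi : δ2 Ric = -((1 / 2 : ℝ) • d S)) {F : ℝ → ℝ} (hF : ContDiff ℝ (⊤ : ℕ∞) F) :
    δ2 (fEinsteinTensor gmet Ric S Hess lap F) = 0 := by
  -- The `ℝ`- and `(M → ℝ)`-actions on `OneF` are not assumed compatible, so the factor `½` is
  -- removed by doubling rather than by moving it past `deriv F ∘ S`.
  refine eq_zero_of_add_self_eq_zero ?_
  calc _ = d ((1 / 2 : ℝ) • (F ∘ S) + (1 / 2 : ℝ) • (F ∘ S))
          - (deriv F ∘ S) • ((1 / 2 : ℝ) • d S + (1 / 2 : ℝ) • d S) := by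
        rw [divergence_fEinsteinTensor_eq hδsmul hδHess hδg hctrg hdadd hBianchi, hdadd,
          smul_add]
        abel
    _ = d (F ∘ S) - (deriv F ∘ S) • d S := by
        rw [half_smul_add_half_smul, half_smul_add_half_smul]
    _ = 0 := by rw [hdchain F S hF, sub_self]

end Divergence

theorem F_Einstein_tensor_proportional_to_metric_factor_is_constant_general
    {M VF : Type*}
    {Sym2T OneF : Type*}
    [AddCommGroup Sym2T] [Module (M → ℝ) Sym2T]
    [AddCommGroup OneF] [Module (M → ℝ) OneF] [Module ℝ OneF]
    -- the geometric data of the Riemannian manifold (M, g)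
    (gmet Ric : Sym2T) (S : M → ℝ)
    (Hess : (M → ℝ) → Sym2T) (lap : (M → ℝ) → M → ℝ)
    (grad : (M → ℝ) → VF)
    (d : (M → ℝ) → OneF)
    (δ2 : Sym2T →+ OneF)
    (ctr : Sym2T → VF → OneF)
    -- F is a smooth function on ℝ
    (F : ℝ → ℝ) (hF : ContDiff ℝ (⊤ : ℕ∞) F)
    -- characteristic identities of the operators
    (hδsmul : ∀ (u : M → ℝ) (T : Sym2T), δ2 (u • T) = u • δ2 T - ctr T (grad u))
    (hδHess : ∀ u : M → ℝ, δ2 (Hess u) = d (lap u) - ctr Ric (grad u))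
    (hδg : δ2 gmet = 0)
    (hctrg : ∀ u : M → ℝ, ctr gmet (grad u) = d u)
    (hdadd : ∀ u w : M → ℝ, d (u + w) = d u + d w)
    (hdchain : ∀ (φ : ℝ → ℝ) (u : M → ℝ), ContDiff ℝ (⊤ : ℕ∞) φ →
      d (φ ∘ u) = (deriv φ ∘ u) • d u)
    (hBianchi : δ2 Ric = -((1 / 2 : ℝ) • d S))
    -- on a connected manifold, a function with vanishing differential is constant
    (hdconst : ∀ u : M → ℝ, d u = 0 → ∀ x y : M, u x = u y)
    -- hypothesis : E_F(g) = f • g for a smooth function f on M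
    (f : M → ℝ)
    (hEf : (deriv F ∘ S) • Ric - Hess (deriv F ∘ S)
        - (lap (deriv F ∘ S) + (1 / 2 : ℝ) • (F ∘ S)) • gmet = f • gmet) :
    -- conclusion: f is a constant function on M
    ∀ x y : M, f x = f y := by
  have hdiv : δ2 (f • gmet) = 0 := by
    rw [← show fEinsteinTensor gmet Ric S Hess lap F = f • gmet from hEf]
    exact divergence_fEinsteinTensor hδsmul hδHess hδg hctrg hdadd hdchain hBianchi hF
  rw [divergence_smul_metric hδsmul hδg hctrg, neg_eq_zero] at hdiv
  exact hdconst f hdiv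

theorem F_Einstein_tensor_proportional_to_metric_factor_is_constant
    {M VF : Type*} [TopologicalSpace M] [ConnectedSpace M]
    {Sym2T OneF : Type*}
    [AddCommGroup Sym2T] [Module (M → ℝ) Sym2T]
    [AddCommGroup OneF] [Module (M → ℝ) OneF] [Module ℝ OneF]
    -- the geometric data of the Riemannian manifold (M, g)
    (gmet Ric : Sym2T) (S : M → ℝ)
    (Hess : (M → ℝ) → Sym2T) (lap : (M → ℝ) → M → ℝ)
    (grad : (M → ℝ) → VF)
    (d : (M → ℝ) → OneF)
    (δ2 : Sym2T →+ OneF)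
    (ctr : Sym2T → VF → OneF)
    -- F is a smooth function on ℝ
    (F : ℝ → ℝ) (hF : ContDiff ℝ (⊤ : ℕ∞) F)
    -- characteristic identities of the operators
    (hδsmul : ∀ (u : M → ℝ) (T : Sym2T), δ2 (u • T) = u • δ2 T - ctr T (grad u))
    (hδHess : ∀ u : M → ℝ, δ2 (Hess u) = d (lap u) - ctr Ric (grad u))
    (hδg : δ2 gmet = 0)
    (hctrg : ∀ u : M → ℝ, ctr gmet (grad u) = d u)
    (hdadd : ∀ u w : M → ℝ, d (u + w) = d u + d w)
    (hdchain : ∀ (φ : ℝ → ℝ) (u : M → ℝ), ContDiff ℝ (⊤ : ℕ∞) φ →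
      d (φ ∘ u) = (deriv φ ∘ u) • d u)
    (hBianchi : δ2 Ric = -((1 / 2 : ℝ) • d S))
    -- on a connected manifold, a function with vanishing differential is constant
    (hdconst : ∀ u : M → ℝ, d u = 0 → ∀ x y : M, u x = u y)
    -- hypothesis : E_F(g) = f • g for a smooth function f on M
    (f : M → ℝ)
    (hEf : (deriv F ∘ S) • Ric - Hess (deriv F ∘ S)
        - (lap (deriv F ∘ S) + (1 / 2 : ℝ) • (F ∘ S)) • gmet = f • gmet) :
    -- conclusion: f is a constant function on M
    ∀ x y : M, f x = f y :=
  F_Einstein_tensor_proportional_to_metric_factor_is_constant_general gmet Ric S Hess lap grad d δ2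
    ctr F hF hδsmul hδHess hδg hctrg hdadd hdchain hBianchi hdconst f hEf
end

section
/- Let (M,g) be a Riemannian manifold, F : ℝ → ℝ smooth, and suppose E_F(g) = λ g for a constant λ. Then for every symmetric 2-covariant tensor field h, (F'(S)/2)(Ric ∘ h + h ∘ Ric) = [λ + Δ F'(S) + (1/2) F(S)] h + (h(∇_· grad F'(S), ·))^σ. -/
/-!
Writing `u = F'(S)`, the hypothesis `E_F(g) = λ g` says `u Ric = Hess u + c g` with
`c = λ + Δu + F(S)/2`. Composing with `h` on either side, and using that `g` is the unit
of `∘`, gives `u (Ric ∘ h + h ∘ Ric) = (Hess u ∘ h + h ∘ Hess u) + 2c h`; halving yields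
the identity. Halving is the same in the unrelated `ℝ`- and `(M → ℝ)`-module structures,
since `a • y = a • (b • y + b • y) = (a + a) • b • y = b • y` when `a + a = 1 = b + b`.
-/

theorem smul_eq_smul_of_add_self_eq_one {R R' E : Type*} [Semiring R] [Semiring R']
    [AddCommMonoid E] [Module R E] [Module R' E] {a : R} {b : R'}
    (ha : a + a = 1) (hb : b + b = 1) (y : E) : a • y = b • y :=
  calc a • y = a • (b • y + b • y) := by rw [← add_smul, hb, one_smul]
    _ = b • y := by rw [smul_add, ← add_smul, ha, one_smul]

theorem smul_comp_add_comp_eq_of_smul_eq {R E : Type*} [Semiring R] [AddCommMonoid E]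
    [Module R E] (comp : E → E → E)
    (hcomp_addl : ∀ T Q P : E, comp (T + Q) P = comp T P + comp Q P)
    (hcomp_addr : ∀ T Q P : E, comp T (Q + P) = comp T Q + comp T P)
    (hcomp_smull : ∀ (u : R) (T Q : E), comp (u • T) Q = u • comp T Q)
    (hcomp_smulr : ∀ (u : R) (T Q : E), comp T (u • Q) = u • comp T Q)
    {g h T A : E} {u c : R} (hgh : comp g h = h) (hhg : comp h g = h)
    (hT : u • T = A + c • g) :
    u • (comp T h + comp h T) = (comp A h + comp h A) + (c + c) • h := by
  have hTh : u • comp T h = comp A h + c • h := by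
    rw [← hcomp_smull, hT, hcomp_addl, hcomp_smull, hgh]
  have hhT : u • comp h T = comp h A + c • h := by
    rw [← hcomp_smulr, hT, hcomp_addr, hcomp_smulr, hhg]
  rw [smul_add, hTh, hhT, add_smul]
  abel

theorem composition_identity_under_EF_proportional_to_metric_general
    {M : Type*} {Sym2T : Type*}
    [AddCommGroup Sym2T] [Module (M → ℝ) Sym2T] [Module ℝ Sym2T]
    -- the geometric data of the Riemannian manifold (M, g)
    (gmet Ric : Sym2T) (S : M → ℝ)
    (Hess : (M → ℝ) → Sym2T) (lap : (M → ℝ) → M → ℝ)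
    (comp : Sym2T → Sym2T → Sym2T)
    -- F is a smooth function on ℝ
    (F : ℝ → ℝ)
    -- E_F(g) = λ g for a constant λ
    (lam : ℝ)
    (hEF : (deriv F ∘ S) • Ric - Hess (deriv F ∘ S)
        - (lap (deriv F ∘ S) + (1 / 2 : ℝ) • (F ∘ S)) • gmet
        = (fun _ => lam : M → ℝ) • gmet)
    -- the symmetric 2-covariant tensor field h
    (h : Sym2T)
    -- properties of the composition ∘ of symmetric 2-tensors
    (hcomp_addl : ∀ T Q R : Sym2T, comp (T + Q) R = comp T R + comp Q R)
    (hcomp_addr : ∀ T Q R : Sym2T, comp T (Q + R) = comp T Q + comp T R)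
    (hcomp_smull : ∀ (u : M → ℝ) (T Q : Sym2T), comp (u • T) Q = u • comp T Q)
    (hcomp_smulr : ∀ (u : M → ℝ) (T Q : Sym2T), comp T (u • Q) = u • comp T Q)
    (hcompg : comp gmet h = h) (hcompg' : comp h gmet = h)
    -- the term (h(∇_· grad F'(S), ·))^σ
    (sigmaTerm : Sym2T)
    (hsigma : sigmaTerm = (1 / 2 : ℝ) •
      (comp (Hess (deriv F ∘ S)) h + comp h (Hess (deriv F ∘ S)))) :
    -- conclusion
    ((1 / 2 : ℝ) • (deriv F ∘ S)) • (comp Ric h + comp h Ric)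
      = ((fun _ => lam : M → ℝ) + lap (deriv F ∘ S) + (1 / 2 : ℝ) • (F ∘ S)) • h
        + sigmaTerm := by
  set u : M → ℝ := deriv F ∘ S
  set c : M → ℝ := (fun _ => lam) + lap u + (1 / 2 : ℝ) • (F ∘ S)
  have hRic : u • Ric = Hess u + c • gmet := by
    linear_combination (norm := module) hEF
  have hcomposed := smul_comp_add_comp_eq_of_smul_eq comp hcomp_addl hcomp_addr hcomp_smull
    hcomp_smulr hcompg hcompg' hRic
  set half : M → ℝ := fun _ => 1 / 2
  have hhalf : half + half = 1 := by ext; norm_num [half]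
  calc ((1 / 2 : ℝ) • u) • (comp Ric h + comp h Ric)
    _ = half • u • (comp Ric h + comp h Ric) := by
      rw [smul_smul]
      rfl
    _ = half • (comp (Hess u) h + comp h (Hess u)) + c • h := by
      rw [hcomposed, smul_add, smul_smul half, mul_add, ← add_mul, hhalf, one_mul]
    _ = c • h + sigmaTerm := by
      rw [hsigma, smul_eq_smul_of_add_self_eq_one hhalf (b := (1 / 2 : ℝ)) (by norm_num), add_comm]

theorem composition_identity_under_EF_proportional_to_metric
    {M : Type*} {Sym2T : Type*}
    [AddCommGroup Sym2T] [Module (M → ℝ) Sym2T] [Module ℝ Sym2T]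
    -- the geometric data of the Riemannian manifold (M, g)
    (gmet Ric : Sym2T) (S : M → ℝ)
    (Hess : (M → ℝ) → Sym2T) (lap : (M → ℝ) → M → ℝ)
    (comp : Sym2T → Sym2T → Sym2T)
    -- F is a smooth function on ℝ
    (F : ℝ → ℝ) (hF : ContDiff ℝ (⊤ : ℕ∞) F)
    -- E_F(g) = λ g for a constant λ
    (lam : ℝ)
    (hEF : (deriv F ∘ S) • Ric - Hess (deriv F ∘ S)
        - (lap (deriv F ∘ S) + (1 / 2 : ℝ) • (F ∘ S)) • gmet
        = (fun _ => lam : M → ℝ) • gmet)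
    -- the symmetric 2-covariant tensor field h
    (h : Sym2T)
    -- properties of the composition ∘ of symmetric 2-tensors
    (hcomp_addl : ∀ T Q R : Sym2T, comp (T + Q) R = comp T R + comp Q R)
    (hcomp_addr : ∀ T Q R : Sym2T, comp T (Q + R) = comp T Q + comp T R)
    (hcomp_smull : ∀ (u : M → ℝ) (T Q : Sym2T), comp (u • T) Q = u • comp T Q)
    (hcomp_smulr : ∀ (u : M → ℝ) (T Q : Sym2T), comp T (u • Q) = u • comp T Q)
    (hcompg : comp gmet h = h) (hcompg' : comp h gmet = h)
    -- the term (h(∇_· grad F'(S), ·))^σ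
    (sigmaTerm : Sym2T)
    (hsigma : sigmaTerm = (1 / 2 : ℝ) •
      (comp (Hess (deriv F ∘ S)) h + comp h (Hess (deriv F ∘ S)))) :
    -- conclusion
    ((1 / 2 : ℝ) • (deriv F ∘ S)) • (comp Ric h + comp h Ric)
      = ((fun _ => lam : M → ℝ) + lap (deriv F ∘ S) + (1 / 2 : ℝ) • (F ∘ S)) • h
        + sigmaTerm :=
  composition_identity_under_EF_proportional_to_metric_general gmet Ric S Hess lap comp F lam hEF h
    hcomp_addl hcomp_addr hcomp_smull hcomp_smulr hcompg hcompg' sigmaTerm hsigma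
end
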